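/- Let F : ℝ → ℝ be defined by F(x) = e^{(1+x)²/2}·∫_0^x e^{−(1+t)²/2} dt. Then for every n ≥ 0, the n-th derivative F^{(n)}(0) is a nonnegative integer. -/

import Mathlib

/-- `ConsecOcc p π i`: the word `π(i) π(i+1) … π(i+r-1)` (positions `0`-indexed)
is order-isomorphic to the pattern word `p 0, …, p (r-1)`. -/
def ConsecOcc {n r : ℕ} (p : Fin r → ℕ) (π : Equiv.Perm (Fin n)) (i : ℕ) : Prop :=
  ∃ h : i + r ≤ n, ∀ j k : Fin r,
    (π ⟨i + j.val, by have := j.isLt; omega⟩ < π ⟨i + k.val, by have := k.isLt; omega⟩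
      ↔ p j < p k)

/-- The number of consecutive occurrences of the pattern `p` in `π`. -/
noncomputable def occCount {n r : ℕ} (p : Fin r → ℕ) (π : Equiv.Perm (Fin n)) : ℕ :=
  Nat.card {i : ℕ // ConsecOcc p π i}

/-- `π` has no consecutive occurrence of any pattern in `ps`. -/
def AvoidsAll {n r : ℕ} (ps : List (Fin r → ℕ)) (π : Equiv.Perm (Fin n)) : Prop :=
  ∀ p ∈ ps, ∀ i, ¬ ConsecOcc p π i

-- Total number of consecutive occurrences of `p` over all size-`n` permutations satisfying `P`.
open scoped Classical in
noncomputable def totOcc {n r : ℕ} (p : Fin r → ℕ) (P : Equiv.Perm (Fin n) → Prop) : ℕ :=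
  ∑ π : Equiv.Perm (Fin n), if P π then occCount p π else 0

/-- The number of size-`n` permutations satisfying `P`. -/
noncomputable def classCard (n : ℕ) (P : Equiv.Perm (Fin n) → Prop) : ℕ :=
  Nat.card {π : Equiv.Perm (Fin n) // P π}

def p123 : Fin 3 → ℕ := ![1,2,3]
def p132 : Fin 3 → ℕ := ![1,3,2]
def p213 : Fin 3 → ℕ := ![2,1,3]
def p231 : Fin 3 → ℕ := ![2,3,1]
def p312 : Fin 3 → ℕ := ![3,1,2]
def p321 : Fin 3 → ℕ := ![3,2,1]

noncomputable def Ffun (x : ℝ) : ℝ :=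
  Real.exp ((1+x)^2/2) * ∫ t in (0:ℝ)..x, Real.exp (-((1+t)^2)/2)

/-!
`F` solves the linear equation `F' = (1 + x) F + 1` with `F 0 = 0`. Differentiating it repeatedly
shows `F⁽ⁿ⁾ = Pₙ F + Qₙ` for polynomials `Pₙ, Qₙ` with natural-number coefficients, obtained from
`P₀ = 1, Q₀ = 0` by `Pₙ₊₁ = Pₙ' + (X + 1) Pₙ` and `Qₙ₊₁ = Qₙ' + Pₙ`; at `0` this leaves `Qₙ(0) ∈ ℕ`.
-/

open Polynomial

namespace Polynomial

variable {R : Type*} [CommSemiring R]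

noncomputable def linearODEIterCoeffs (a b : R[X]) : ℕ → R[X] × R[X]
  | 0 => (1, 0)
  | n + 1 =>
    let c := linearODEIterCoeffs a b n
    (derivative c.1 + a * c.1, derivative c.2 + b * c.1)

end Polynomial

theorem iteratedDeriv_eq_of_hasDerivAt_linear {R 𝕜 : Type*} [CommSemiring R]
    [NontriviallyNormedField 𝕜] [Algebra R 𝕜] {f : 𝕜 → 𝕜} {a b : R[X]}
    (hf : ∀ x, HasDerivAt f (aeval x a * f x + aeval x b) x) (n : ℕ) :
    iteratedDeriv n f = fun x =>
      aeval x (linearODEIterCoeffs a b n).1 * f x + aeval x (linearODEIterCoeffs a b n).2 := by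
  induction n with
  | zero => funext x; simp [linearODEIterCoeffs]
  | succ n ih =>
    funext x
    set c := linearODEIterCoeffs a b n
    have hderiv : HasDerivAt (fun y => aeval y c.1 * f y + aeval y c.2) _ x :=
      ((c.1.hasDerivAt_aeval x).mul (hf x)).add (c.2.hasDerivAt_aeval x)
    rw [iteratedDeriv_succ, ih, hderiv.deriv]
    simp only [linearODEIterCoeffs, map_add, map_mul]
    ring

theorem hasDerivAt_Ffun (x : ℝ) : HasDerivAt Ffun ((1 + x) * Ffun x + 1) x := by
  have hsq : HasDerivAt (fun y : ℝ => (1+y)^2/2) (1 + x) x := by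
    simpa using (((hasDerivAt_id x).const_add 1).pow 2).div_const 2
  have hint : HasDerivAt (fun y : ℝ => ∫ t in (0:ℝ)..y, Real.exp (-((1+t)^2)/2))
      (Real.exp (-((1+x)^2)/2)) x :=
    (Continuous.integral_hasStrictDerivAt (by fun_prop) 0 x).hasDerivAt
  refine (hsq.exp.mul hint).congr_deriv ?_
  rw [← Real.exp_add, neg_div, add_neg_cancel, Real.exp_zero, Ffun]
  ring

theorem Ffun_zero : Ffun 0 = 0 := by
  simp [Ffun]

theorem stmt14 (n : ℕ) : ∃ m : ℕ, iteratedDeriv n Ffun 0 = (m : ℝ) := by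
  have hF : ∀ x, HasDerivAt Ffun (aeval x (X + 1 : ℕ[X]) * Ffun x + aeval x (1 : ℕ[X])) x :=
    fun x => by simpa [add_comm] using hasDerivAt_Ffun x
  refine ⟨(linearODEIterCoeffs (X + 1) 1 n).2.coeff 0, ?_⟩
  rw [iteratedDeriv_eq_of_hasDerivAt_linear hF n]
  simp only [Ffun_zero, mul_zero, zero_add]
  rw [← coeff_zero_eq_aeval_zero']
  rfl
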